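/- arXiv:1010.2591 — 2 statements merged into one kernel-verified Lean document; each statement's English description precedes it below -/
import Mathlib

section
/- Let Ω ⊆ ℂⁿ be open, φ, ψ : Ω → ℝ smooth functions with φ plurisubharmonic and ψ > 0, and let K ⊆ Ω be compact. Assume that the Hermitian form i∂∂̄φ + i∂φ∧∂̄φ + i∂∂̄ψ is positive definite at every point of K. Then for all sufficiently small a > 0, the function (1 + a²ψ)·e^{aφ} is strictly plurisubharmonic on K. -/
open Complex

/-- The Wirtinger derivative `∂f/∂z_j`. -/
noncomputable def wD {n : ℕ} (j : Fin n) (f : (Fin n → ℂ) → ℂ) (z : Fin n → ℂ) : ℂ :=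
  (1/2 : ℂ) * (fderiv ℝ f z (Pi.single j 1) - Complex.I * fderiv ℝ f z (Pi.single j Complex.I))

/-- The Wirtinger derivative `∂f/∂z̄_k`. -/
noncomputable def wDbar {n : ℕ} (k : Fin n) (f : (Fin n → ℂ) → ℂ) (z : Fin n → ℂ) : ℂ :=
  (1/2 : ℂ) * (fderiv ℝ f z (Pi.single k 1) + Complex.I * fderiv ℝ f z (Pi.single k Complex.I))

/-- The complex Hessian `∂²f/∂z_j∂z̄_k`. -/
noncomputable def cHess {n : ℕ} (j k : Fin n) (f : (Fin n → ℂ) → ℂ) (z : Fin n → ℂ) : ℂ :=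
  wD j (fun w => wDbar k f w) z

/-- The Hermitian quadratic form `Σ_{j,k} H_{jk} v_j v̄_k` of a coefficient
matrix `H`. -/
noncomputable def hermQF {n : ℕ} (H : Fin n → Fin n → ℂ) (v : Fin n → ℂ) : ℂ :=
  ∑ j : Fin n, ∑ k : Fin n, H j k * v j * (starRingEnd ℂ) (v k)

variable {n : ℕ} {f g : (Fin n → ℂ) → ℂ} {z : Fin n → ℂ} {j k : Fin n} {Ω : Set (Fin n → ℂ)}

lemma fderiv_apply_mul (hf : DifferentiableAt ℝ f z) (hg : DifferentiableAt ℝ g z) (v : Fin n → ℂ) :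
    fderiv ℝ (fun w => f w * g w) z v = f z * fderiv ℝ g z v + fderiv ℝ f z v * g z := by
  rw [fderiv_fun_mul hf hg]; simp [smul_eq_mul]; ring

lemma fderiv_apply_cexp (hf : DifferentiableAt ℝ f z) (v : Fin n → ℂ) :
    fderiv ℝ (fun w => Complex.exp (f w)) z v = Complex.exp (f z) * fderiv ℝ f z v := by
  have h1 : HasFDerivAt (fun w => Complex.exp (f w))
      (Complex.exp (f z) • (fderiv ℝ f z)) z := by
    have := ((Complex.hasDerivAt_exp (f z)).hasFDerivAt.restrictScalars ℝ).comp z hf.hasFDerivAt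
    exact hf.hasFDerivAt.cexp
  rw [h1.fderiv]; simp [smul_eq_mul]

lemma DifferentiableAt.myCexp (hf : DifferentiableAt ℝ f z) :
    DifferentiableAt ℝ (fun w => Complex.exp (f w)) z :=
  (((Complex.hasDerivAt_exp (f z)).hasFDerivAt.restrictScalars ℝ).comp z
    hf.hasFDerivAt).differentiableAt

lemma wD_mul (hf : DifferentiableAt ℝ f z) (hg : DifferentiableAt ℝ g z) :
    wD j (fun w => f w * g w) z = f z * wD j g z + wD j f z * g z := by
  simp only [wD, fderiv_apply_mul hf hg]; ring

lemma wDbar_mul (hf : DifferentiableAt ℝ f z) (hg : DifferentiableAt ℝ g z) :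
    wDbar k (fun w => f w * g w) z = f z * wDbar k g z + wDbar k f z * g z := by
  simp only [wDbar, fderiv_apply_mul hf hg]; ring

lemma wD_cexp (hf : DifferentiableAt ℝ f z) :
    wD j (fun w => Complex.exp (f w)) z = Complex.exp (f z) * wD j f z := by
  simp only [wD, fderiv_apply_cexp hf]; ring

lemma wDbar_cexp (hf : DifferentiableAt ℝ f z) :
    wDbar k (fun w => Complex.exp (f w)) z = Complex.exp (f z) * wDbar k f z := by
  simp only [wDbar, fderiv_apply_cexp hf]; ring

lemma wD_const_mul (hf : DifferentiableAt ℝ f z) (c : ℂ) :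
    wD j (fun w => c * f w) z = c * wD j f z := by
  simp only [wD, fderiv_const_mul hf c, ContinuousLinearMap.smul_apply, smul_eq_mul]; ring

lemma wDbar_const_mul (hf : DifferentiableAt ℝ f z) (c : ℂ) :
    wDbar k (fun w => c * f w) z = c * wDbar k f z := by
  simp only [wDbar, fderiv_const_mul hf c, ContinuousLinearMap.smul_apply, smul_eq_mul]; ring

lemma wD_add (hf : DifferentiableAt ℝ f z) (hg : DifferentiableAt ℝ g z) :
    wD j (fun w => f w + g w) z = wD j f z + wD j g z := by
  simp only [wD, fderiv_fun_add hf hg, ContinuousLinearMap.add_apply]; ring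

lemma wDbar_add (hf : DifferentiableAt ℝ f z) (hg : DifferentiableAt ℝ g z) :
    wDbar k (fun w => f w + g w) z = wDbar k f z + wDbar k g z := by
  simp only [wDbar, fderiv_fun_add hf hg, ContinuousLinearMap.add_apply]; ring

lemma wD_const_add (c : ℂ) :
    wD j (fun w => c + f w) z = wD j f z := by
  simp only [wD, fderiv_const_add c]

lemma wDbar_const_add (c : ℂ) :
    wDbar k (fun w => c + f w) z = wDbar k f z := by
  simp only [wDbar, fderiv_const_add c]

lemma wD_congr {g : (Fin n → ℂ) → ℂ} (h : f =ᶠ[nhds z] g) : wD j f z = wD j g z := by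
  simp only [wD, h.fderiv_eq]

lemma contDiffOn_wD (hΩ : IsOpen Ω) (hf : ContDiffOn ℝ (⊤ : ℕ∞) f Ω) (j : Fin n) :
    ContDiffOn ℝ (⊤ : ℕ∞) (wD j f) Ω := by
  have h1 : ContDiffOn ℝ (⊤ : ℕ∞) (fderiv ℝ f) Ω := hf.fderiv_of_isOpen hΩ (by simp)
  have h2 : wD j f = fun w => (1/2 : ℂ) * ((fderiv ℝ f w) (Pi.single j 1)
      - Complex.I * (fderiv ℝ f w) (Pi.single j Complex.I)) := rfl
  rw [h2]
  exact contDiffOn_const.mul ((h1.clm_apply contDiffOn_const).sub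
    (contDiffOn_const.mul (h1.clm_apply contDiffOn_const)))

lemma contDiffOn_wDbar (hΩ : IsOpen Ω) (hf : ContDiffOn ℝ (⊤ : ℕ∞) f Ω) (k : Fin n) :
    ContDiffOn ℝ (⊤ : ℕ∞) (wDbar k f) Ω := by
  have h1 : ContDiffOn ℝ (⊤ : ℕ∞) (fderiv ℝ f) Ω := hf.fderiv_of_isOpen hΩ (by simp)
  have h2 : wDbar k f = fun w => (1/2 : ℂ) * ((fderiv ℝ f w) (Pi.single k 1)
      + Complex.I * (fderiv ℝ f w) (Pi.single k Complex.I)) := rfl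
  rw [h2]
  exact contDiffOn_const.mul ((h1.clm_apply contDiffOn_const).add
    (contDiffOn_const.mul (h1.clm_apply contDiffOn_const)))

lemma diffAt_of_contDiffOn (hΩ : IsOpen Ω) (hf : ContDiffOn ℝ (⊤ : ℕ∞) f Ω)
    (hz : z ∈ Ω) : DifferentiableAt ℝ f z :=
  (hf.contDiffAt (hΩ.mem_nhds hz)).differentiableAt (by simp)

lemma cHess_formula (hΩ : IsOpen Ω) {φ ψ : (Fin n → ℂ) → ℝ}
    (hφ : ContDiffOn ℝ (⊤ : ℕ∞) φ Ω) (hψ : ContDiffOn ℝ (⊤ : ℕ∞) ψ Ω) (a : ℝ) (hz : z ∈ Ω) (j k : Fin n) :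
    cHess j k (fun w => (((1 + a ^ 2 * ψ w) * Real.exp (a * φ w) : ℝ) : ℂ)) z
    = Complex.exp ((a:ℂ) * ((φ z:ℝ):ℂ)) *
      ( (a:ℂ)^2 * cHess j k (fun w => ((ψ w:ℝ):ℂ)) z
      + (a:ℂ)^3 * (wD j (fun w => ((ψ w:ℝ):ℂ)) z * wDbar k (fun w => ((φ w:ℝ):ℂ)) z)
      + (a:ℂ)^3 * (wD j (fun w => ((φ w:ℝ):ℂ)) z * wDbar k (fun w => ((ψ w:ℝ):ℂ)) z)
      + (a:ℂ) * (1 + (a:ℂ)^2 * ((ψ z:ℝ):ℂ)) * cHess j k (fun w => ((φ w:ℝ):ℂ)) z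
      + (a:ℂ)^2 * (1 + (a:ℂ)^2 * ((ψ z:ℝ):ℂ)) *
          (wD j (fun w => ((φ w:ℝ):ℂ)) z * wDbar k (fun w => ((φ w:ℝ):ℂ)) z)) := by
  set φc : (Fin n → ℂ) → ℂ := fun w => ((φ w:ℝ):ℂ) with hφc
  set ψc : (Fin n → ℂ) → ℂ := fun w => ((ψ w:ℝ):ℂ) with hψc
  have hφcC : ContDiffOn ℝ (⊤ : ℕ∞) φc Ω := Complex.ofRealCLM.contDiff.comp_contDiffOn hφ
  have hψcC : ContDiffOn ℝ (⊤ : ℕ∞) ψc Ω := Complex.ofRealCLM.contDiff.comp_contDiffOn hψ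
  -- rewrite the function
  have hF : (fun w => (((1 + a ^ 2 * ψ w) * Real.exp (a * φ w) : ℝ) : ℂ))
      = fun w => (1 + (a:ℂ)^2 * ψc w) * Complex.exp ((a:ℂ) * φc w) := by
    funext w
    simp only [hφc, hψc]
    push_cast [Complex.ofReal_exp]
    ring
  rw [hF]
  -- the first Wirtinger derivative identity on Ω
  set G : (Fin n → ℂ) → ℂ := fun w =>
    Complex.exp ((a:ℂ) * φc w) *
      ((1 + (a:ℂ)^2 * ψc w) * ((a:ℂ) * wDbar k φc w) + (a:ℂ)^2 * wDbar k ψc w) with hG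
  have hstep1 : ∀ w ∈ Ω,
      wDbar k (fun w' => (1 + (a:ℂ)^2 * ψc w') * Complex.exp ((a:ℂ) * φc w')) w = G w := by
    intro w hw
    have dφ : DifferentiableAt ℝ φc w := diffAt_of_contDiffOn hΩ hφcC hw
    have dψ : DifferentiableAt ℝ ψc w := diffAt_of_contDiffOn hΩ hψcC hw
    have dg : DifferentiableAt ℝ (fun w' => 1 + (a:ℂ)^2 * ψc w') w :=
      ((dψ.const_mul _).const_add 1)
    have dh : DifferentiableAt ℝ (fun w' => Complex.exp ((a:ℂ) * φc w')) w :=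
      (dφ.const_mul _).myCexp
    rw [wDbar_mul dg dh, wDbar_cexp (dφ.const_mul _), wDbar_const_mul dφ,
      wDbar_const_add, wDbar_const_mul dψ]
    simp only [hG]
    ring
  have hEq : (fun w => wDbar k
      (fun w' => (1 + (a:ℂ)^2 * ψc w') * Complex.exp ((a:ℂ) * φc w')) w) =ᶠ[nhds z] G :=
    Filter.eventuallyEq_of_mem (hΩ.mem_nhds hz) hstep1
  have hc : cHess j k (fun w' => (1 + (a:ℂ)^2 * ψc w') * Complex.exp ((a:ℂ) * φc w')) z
      = wD j G z := wD_congr hEq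
  rw [hc]
  -- now differentiate G
  have dφ : DifferentiableAt ℝ φc z := diffAt_of_contDiffOn hΩ hφcC hz
  have dψ : DifferentiableAt ℝ ψc z := diffAt_of_contDiffOn hΩ hψcC hz
  have dPφ : DifferentiableAt ℝ (wDbar k φc) z :=
    diffAt_of_contDiffOn hΩ (contDiffOn_wDbar hΩ hφcC k) hz
  have dPψ : DifferentiableAt ℝ (wDbar k ψc) z :=
    diffAt_of_contDiffOn hΩ (contDiffOn_wDbar hΩ hψcC k) hz
  have dh : DifferentiableAt ℝ (fun w' => Complex.exp ((a:ℂ) * φc w')) z :=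
    (dφ.const_mul _).myCexp
  have dq1 : DifferentiableAt ℝ (fun w => (1 + (a:ℂ)^2 * ψc w) * ((a:ℂ) * wDbar k φc w)) z :=
    ((dψ.const_mul _).const_add 1).mul (dPφ.const_mul _)
  have dq : DifferentiableAt ℝ
      (fun w => (1 + (a:ℂ)^2 * ψc w) * ((a:ℂ) * wDbar k φc w) + (a:ℂ)^2 * wDbar k ψc w) z :=
    dq1.add (dPψ.const_mul _)
  have hGw : wD j G z = Complex.exp ((a:ℂ) * φc z) *
      ((1 + (a:ℂ)^2 * ψc z) * ((a:ℂ) * wD j (wDbar k φc) z)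
        + ((a:ℂ)^2 * wD j ψc z) * ((a:ℂ) * wDbar k φc z)
        + (a:ℂ)^2 * wD j (wDbar k ψc) z)
      + (Complex.exp ((a:ℂ) * φc z) * ((a:ℂ) * wD j φc z)) *
        ((1 + (a:ℂ)^2 * ψc z) * ((a:ℂ) * wDbar k φc z) + (a:ℂ)^2 * wDbar k ψc z) := by
    rw [hG]
    rw [wD_mul dh dq, wD_cexp (dφ.const_mul _), wD_const_mul dφ,
      wD_add dq1 (dPψ.const_mul _),
      wD_mul ((dψ.const_mul _).const_add 1) (dPφ.const_mul _),
      wD_const_add, wD_const_mul dψ, wD_const_mul dPφ, wD_const_mul dPψ]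
  rw [hGw]
  calc cexp (↑a * φc z) *
        ((1 + ↑a ^ 2 * ψc z) * (↑a * wD j (wDbar k φc) z) + ↑a ^ 2 * wD j ψc z * (↑a * wDbar k φc z) +
          ↑a ^ 2 * wD j (wDbar k ψc) z) +
      cexp (↑a * φc z) * (↑a * wD j φc z) * ((1 + ↑a ^ 2 * ψc z) * (↑a * wDbar k φc z) + ↑a ^ 2 * wDbar k ψc z)
      = cexp (↑a * φc z) *
      (↑a ^ 2 * wD j (wDbar k ψc) z + ↑a ^ 3 * (wD j ψc z * wDbar k φc z) + ↑a ^ 3 * (wD j φc z * wDbar k ψc z) +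
          ↑a * (1 + ↑a ^ 2 * ψc z) * wD j (wDbar k φc) z +
        ↑a ^ 2 * (1 + ↑a ^ 2 * ψc z) * (wD j φc z * wDbar k φc z)) := by ring
    _ = cexp (↑a * ↑(φ z)) *
      (↑a ^ 2 * cHess j k ψc z + ↑a ^ 3 * (wD j ψc z * wDbar k φc z) + ↑a ^ 3 * (wD j φc z * wDbar k ψc z) +
          ↑a * (1 + ↑a ^ 2 * ↑(ψ z)) * cHess j k φc z +
        ↑a ^ 2 * (1 + ↑a ^ 2 * ↑(ψ z)) * (wD j φc z * wDbar k φc z)) := rfl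


variable {n : ℕ} {v : Fin n → ℂ}

lemma hermQF_const_mul (c : ℂ) (H : Fin n → Fin n → ℂ) :
    hermQF (fun j k => c * H j k) v = c * hermQF H v := by
  simp only [hermQF, Finset.mul_sum]
  refine Finset.sum_congr rfl fun j _ => Finset.sum_congr rfl fun k _ => by ring

lemma hermQF_outer (x y : Fin n → ℂ) :
    hermQF (fun j k => x j * y k) v
      = (∑ j, x j * v j) * (∑ k, y k * (starRingEnd ℂ) (v k)) := by
  rw [hermQF, Finset.sum_mul_sum]
  refine Finset.sum_congr rfl fun j _ => Finset.sum_congr rfl fun k _ => by ring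

lemma hermQF_add3 (H1 H2 H3 : Fin n → Fin n → ℂ) :
    hermQF (fun j k => H1 j k + H2 j k + H3 j k) v
      = hermQF H1 v + hermQF H2 v + hermQF H3 v := by
  simp only [hermQF, ← Finset.sum_add_distrib]
  refine Finset.sum_congr rfl fun j _ => Finset.sum_congr rfl fun k _ => by ring

lemma hermQF_add5 (c : ℂ) (H1 H2 H3 H4 H5 : Fin n → Fin n → ℂ) :
    hermQF (fun j k => c * (H1 j k + H2 j k + H3 j k + H4 j k + H5 j k)) v
      = c * (hermQF H1 v + hermQF H2 v + hermQF H3 v + hermQF H4 v + hermQF H5 v) := by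
  simp only [hermQF, ← Finset.sum_add_distrib, Finset.mul_sum]
  refine Finset.sum_congr rfl fun j _ => Finset.sum_congr rfl fun k _ => by ring

lemma hermQF_real_smul (r : ℝ) (H : Fin n → Fin n → ℂ) (v : Fin n → ℂ) :
    hermQF H (r • v) = ((r:ℂ))^2 * hermQF H v := by
  simp only [hermQF, Pi.smul_apply, real_smul, map_mul, Complex.conj_ofReal, Finset.mul_sum]
  refine Finset.sum_congr rfl fun j _ => Finset.sum_congr rfl fun k _ => by ring



set_option maxHeartbeats 2000000 in
/-- Let `φ, ψ` be smooth on an open `Ω ⊆ ℂⁿ` with `φ` plurisubharmonic and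
`ψ > 0`, and let `K ⊆ Ω` be compact.  If the Hermitian form
`i∂∂̄φ + i∂φ∧∂̄φ + i∂∂̄ψ` is positive definite at every point of `K`, then for
all sufficiently small `a > 0` the function `(1 + a²ψ)·e^{aφ}` is strictly
plurisubharmonic on `K`. -/
theorem small_exponential_perturbation_strictly_psh {n : ℕ}
    {Ω : Set (Fin n → ℂ)} (hΩ : IsOpen Ω) (φ ψ : (Fin n → ℂ) → ℝ)
    (hφ : ContDiffOn ℝ (⊤ : ℕ∞) φ Ω) (hψ : ContDiffOn ℝ (⊤ : ℕ∞) ψ Ω)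
    (hφpsh : ∀ z ∈ Ω, ∀ v : Fin n → ℂ,
      0 ≤ (hermQF (fun j k => cHess j k (fun w => ((φ w : ℝ) : ℂ)) z) v).re)
    (hψpos : ∀ z ∈ Ω, 0 < ψ z)
    (K : Set (Fin n → ℂ)) (hK : IsCompact K) (hKΩ : K ⊆ Ω)
    (hposdef : ∀ z ∈ K, ∀ v : Fin n → ℂ, v ≠ 0 →
      0 < (hermQF (fun j k =>
          cHess j k (fun w => ((φ w : ℝ) : ℂ)) z
          + wD j (fun w => ((φ w : ℝ) : ℂ)) z * wDbar k (fun w => ((φ w : ℝ) : ℂ)) z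
          + cHess j k (fun w => ((ψ w : ℝ) : ℂ)) z) v).re) :
    ∃ a₀ > (0:ℝ), ∀ a : ℝ, 0 < a → a < a₀ → ∀ z ∈ K, ∀ v : Fin n → ℂ, v ≠ 0 →
      0 < (hermQF (fun j k =>
        cHess j k (fun w =>
          (((1 + a ^ 2 * ψ w) * Real.exp (a * φ w) : ℝ) : ℂ)) z) v).re := by
  classical
  rcases K.eq_empty_or_nonempty with rfl | hKne
  · exact ⟨1, one_pos, fun a _ _ z hz => absurd hz (Set.notMem_empty z)⟩
  rcases isEmpty_or_nonempty (Fin n) with hE | hNE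
  · refine ⟨1, one_pos, fun a _ _ z hz v hv => absurd ?_ hv⟩
    funext i; exact isEmptyElim i
  set φc : (Fin n → ℂ) → ℂ := fun w => ((φ w : ℝ) : ℂ) with hφcdef
  set ψc : (Fin n → ℂ) → ℂ := fun w => ((ψ w : ℝ) : ℂ) with hψcdef
  have hφcC : ContDiffOn ℝ (⊤ : ℕ∞) φc Ω := Complex.ofRealCLM.contDiff.comp_contDiffOn hφ
  have hψcC : ContDiffOn ℝ (⊤ : ℕ∞) ψc Ω := Complex.ofRealCLM.contDiff.comp_contDiffOn hψ
  set Afun : (Fin n → ℂ) → Fin n → Fin n → ℂ :=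
    fun z j k => cHess j k φc z + wD j φc z * wDbar k φc z + cHess j k ψc z with hAfun
  have hA : ∀ j k : Fin n, ContinuousOn (fun z => Afun z j k) Ω := by
    intro j k
    exact (((contDiffOn_wD hΩ (contDiffOn_wDbar hΩ hφcC k) j).continuousOn).add
      (((contDiffOn_wD hΩ hφcC j).continuousOn).mul
        ((contDiffOn_wDbar hΩ hφcC k).continuousOn))).add
      ((contDiffOn_wD hΩ (contDiffOn_wDbar hΩ hψcC k) j).continuousOn)
  have hGcont : ContinuousOn (fun p : (Fin n → ℂ) × (Fin n → ℂ) =>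
      (hermQF (Afun p.1) p.2).re) (Ω ×ˢ (Set.univ : Set (Fin n → ℂ))) := by
    apply Complex.continuous_re.comp_continuousOn
    have h : (fun p : (Fin n → ℂ) × (Fin n → ℂ) => hermQF (Afun p.1) p.2)
        = fun p => ∑ j, ∑ k, Afun p.1 j k * p.2 j * (starRingEnd ℂ) (p.2 k) := rfl
    rw [h]
    apply continuousOn_finset_sum
    intro j _
    apply continuousOn_finset_sum
    intro k _
    have h1 : ContinuousOn (fun p : (Fin n → ℂ) × (Fin n → ℂ) => Afun p.1 j k)
        (Ω ×ˢ (Set.univ : Set (Fin n → ℂ))) :=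
      (hA j k).comp continuousOn_fst (fun p hp => hp.1)
    exact (h1.mul ((continuous_apply j).comp continuous_snd).continuousOn).mul
      (Complex.continuous_conj.comp ((continuous_apply k).comp continuous_snd)).continuousOn
  set S : Set ((Fin n → ℂ) × (Fin n → ℂ)) := K ×ˢ Metric.sphere 0 1 with hSdef
  have hScomp : IsCompact S := hK.prod (isCompact_sphere 0 1)
  have hSne : S.Nonempty := hKne.prod (NormedSpace.sphere_nonempty.mpr zero_le_one)
  have hsub : S ⊆ Ω ×ˢ Set.univ := Set.prod_mono hKΩ (Set.subset_univ _)
  obtain ⟨p₀, hp₀, hminOn⟩ := hScomp.exists_isMinOn hSne (hGcont.mono hsub)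
  set ε := (hermQF (Afun p₀.1) p₀.2).re with hεdef
  have hp₀2 : ‖p₀.2‖ = 1 := mem_sphere_zero_iff_norm.1 hp₀.2
  have hε : 0 < ε := by
    apply hposdef p₀.1 hp₀.1 p₀.2
    intro h0
    rw [h0] at hp₀2; simp at hp₀2
  -- uniform bound C on the first-order derivatives and ψ on K
  set r : (Fin n → ℂ) → ℝ := fun z =>
    (∑ j, (‖wD j φc z‖ + ‖wDbar j φc z‖ + ‖wD j ψc z‖ + ‖wDbar j ψc z‖)) + |ψ z| with hrdef
  have hrcont : ContinuousOn r K := by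
    apply ContinuousOn.mono _ hKΩ
    apply ContinuousOn.add
    · apply continuousOn_finset_sum
      intro j _
      exact (((contDiffOn_wD hΩ hφcC j).continuousOn.norm.add
        (contDiffOn_wDbar hΩ hφcC j).continuousOn.norm).add
        (contDiffOn_wD hΩ hψcC j).continuousOn.norm).add
        (contDiffOn_wDbar hΩ hψcC j).continuousOn.norm
    · exact (hψ.continuousOn.abs)
  obtain ⟨C0, hC0⟩ := hK.exists_bound_of_continuousOn hrcont
  set C := max C0 1 with hCdef
  have hC1 : (1:ℝ) ≤ C := le_max_right _ _
  have hC0' : (0:ℝ) < C := lt_of_lt_of_le one_pos hC1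
  have hrC : ∀ z ∈ K, r z ≤ C := fun z hz =>
    le_trans (le_trans (le_abs_self _) (by simpa [Real.norm_eq_abs] using hC0 z hz))
      (le_max_left _ _)
  have hterm_nonneg : ∀ z, ∀ j, (0:ℝ) ≤ ‖wD j φc z‖ + ‖wDbar j φc z‖ + ‖wD j ψc z‖ + ‖wDbar j ψc z‖ := by
    intro z j; positivity
  refine ⟨min 1 (ε / (3 * C ^ 3 + 1)), lt_min one_pos (by positivity), ?_⟩
  intro a ha0 haa0 z hzK v hv
  have hzΩ : z ∈ Ω := hKΩ hzK
  have ha1 : a ≤ 1 := le_of_lt (lt_of_lt_of_le haa0 (min_le_left _ _))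
  have haε : a * (3 * C ^ 3 + 1) < ε := by
    have h1 : a < ε / (3 * C ^ 3 + 1) := lt_of_lt_of_le haa0 (min_le_right _ _)
    have h2 : (0:ℝ) < 3 * C ^ 3 + 1 := by positivity
    calc a * (3 * C ^ 3 + 1) < (ε / (3 * C ^ 3 + 1)) * (3 * C ^ 3 + 1) := by
          exact mul_lt_mul_of_pos_right h1 h2
      _ = ε := div_mul_cancel₀ ε (ne_of_gt h2)
  set t := ‖v‖ with htdef
  have ht : 0 < t := norm_pos_iff.mpr hv
  set T := ∑ j, wD j φc z * v j with hTdef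
  set T' := ∑ k, wDbar k φc z * (starRingEnd ℂ) (v k) with hT'def
  set Sψ := ∑ j, wD j ψc z * v j with hSψdef
  set Sψ' := ∑ k, wDbar k ψc z * (starRingEnd ℂ) (v k) with hSψ'def
  set qφ := (hermQF (fun j k => cHess j k φc z) v).re with hqφdef
  set qψ := (hermQF (fun j k => cHess j k ψc z) v).re with hqψdef
  set x := (T * T').re with hxdef
  set y2 := (Sψ * T').re with hy2def
  set y3 := (T * Sψ').re with hy3def
  have hmat : (fun j k => cHess j k
        (fun w => (((1 + a ^ 2 * ψ w) * Real.exp (a * φ w) : ℝ) : ℂ)) z)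
      = fun j k => Complex.exp ((a:ℂ) * ((φ z:ℝ):ℂ)) * ( (a:ℂ)^2 * cHess j k ψc z
        + (a:ℂ)^3 * (wD j ψc z * wDbar k φc z)
        + (a:ℂ)^3 * (wD j φc z * wDbar k ψc z)
        + (a:ℂ) * (1 + (a:ℂ)^2 * ((ψ z:ℝ):ℂ)) * cHess j k φc z
        + (a:ℂ)^2 * (1 + (a:ℂ)^2 * ((ψ z:ℝ):ℂ)) * (wD j φc z * wDbar k φc z)) := by
    funext j k
    exact cHess_formula hΩ hφ hψ a hzΩ j k
  have hQ : hermQF (fun j k => cHess j k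
        (fun w => (((1 + a ^ 2 * ψ w) * Real.exp (a * φ w) : ℝ) : ℂ)) z) v
      = ((Real.exp (a * φ z) : ℝ):ℂ) * ( ((a^2:ℝ):ℂ) * hermQF (fun j k => cHess j k ψc z) v
        + ((a^3:ℝ):ℂ) * (Sψ * T') + ((a^3:ℝ):ℂ) * (T * Sψ')
        + ((a * (1 + a^2 * ψ z) : ℝ):ℂ) * hermQF (fun j k => cHess j k φc z) v
        + ((a^2 * (1 + a^2 * ψ z) : ℝ):ℂ) * (T * T')) := by
    rw [hmat, hermQF_add5, hermQF_const_mul, hermQF_const_mul, hermQF_const_mul,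
      hermQF_const_mul, hermQF_const_mul, hermQF_outer, hermQF_outer, hermQF_outer]
    push_cast
    ring
  have hQre : (hermQF (fun j k => cHess j k
        (fun w => (((1 + a ^ 2 * ψ w) * Real.exp (a * φ w) : ℝ) : ℂ)) z) v).re
      = Real.exp (a * φ z) * ( a^2 * qψ + a^3 * y2 + a^3 * y3
        + (a * (1 + a^2 * ψ z)) * qφ + (a^2 * (1 + a^2 * ψ z)) * x) := by
    rw [hQ]
    simp only [Complex.re_ofReal_mul, Complex.add_re]
    rfl
  -- lower bound from compactness: ε * t^2 ≤ qφ + x + qψ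
  have hdecomp : (hermQF (Afun z) v).re = qφ + x + qψ := by
    have h1 : hermQF (Afun z) v = hermQF (fun j k => cHess j k φc z) v + T * T'
        + hermQF (fun j k => cHess j k ψc z) v := by
      have h0 : hermQF (Afun z) v = hermQF (fun j k => cHess j k φc z
          + wD j φc z * wDbar k φc z + cHess j k ψc z) v := rfl
      rw [h0, hermQF_add3, hermQF_outer]
    rw [h1]
    simp only [Complex.add_re, hqφdef, hqψdef, hxdef]
  have hsum : ε * t^2 ≤ qφ + x + qψ := by
    set u : Fin n → ℂ := t⁻¹ • v with hudef
    have hun : ‖u‖ = 1 := by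
      rw [hudef, norm_smul, Real.norm_eq_abs, abs_of_pos (inv_pos.mpr ht)]
      exact inv_mul_cancel₀ (ne_of_gt ht)
    have hzu : (z, u) ∈ S := Set.mem_prod.mpr ⟨hzK, mem_sphere_zero_iff_norm.mpr hun⟩
    have h1 : ε ≤ (hermQF (Afun z) u).re := isMinOn_iff.mp hminOn (z, u) hzu
    have hv_eq : v = t • u := by
      rw [hudef, smul_smul, mul_inv_cancel₀ (ne_of_gt ht), one_smul]
    have h2 : (hermQF (Afun z) v).re = t^2 * (hermQF (Afun z) u).re := by
      calc (hermQF (Afun z) v).re = (hermQF (Afun z) (t • u)).re := by rw [← hv_eq]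
        _ = (((t:ℂ))^2 * hermQF (Afun z) u).re := by rw [hermQF_real_smul]
        _ = (((t^2:ℝ):ℂ) * hermQF (Afun z) u).re := by push_cast; ring_nf
        _ = t^2 * (hermQF (Afun z) u).re := by rw [Complex.re_ofReal_mul]
    have h3 : t^2 * ε ≤ t^2 * (hermQF (Afun z) u).re :=
      mul_le_mul_of_nonneg_left h1 (sq_nonneg t)
    calc ε * t^2 = t^2 * ε := mul_comm _ _
      _ ≤ t^2 * (hermQF (Afun z) u).re := h3
      _ = (hermQF (Afun z) v).re := h2.symm
      _ = qφ + x + qψ := hdecomp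
  -- norm bounds
  have hb : ∀ z' ∈ K,
      (∑ j, ‖wD j φc z'‖) ≤ C ∧ (∑ j, ‖wDbar j φc z'‖) ≤ C
      ∧ (∑ j, ‖wD j ψc z'‖) ≤ C ∧ (∑ j, ‖wDbar j ψc z'‖) ≤ C ∧ ψ z' ≤ C := by
    intro z' hz'
    have hr := hrC z' hz'
    have habs : |ψ z'| ≤ r z' := by
      rw [hrdef]
      exact le_add_of_nonneg_left (Finset.sum_nonneg fun j _ => hterm_nonneg z' j)
    refine ⟨?_, ?_, ?_, ?_, le_trans (le_trans (le_abs_self _) habs) hr⟩ <;>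
    · refine le_trans (le_trans (Finset.sum_le_sum (fun j _ => ?_))
        (le_add_of_nonneg_right (abs_nonneg (ψ z')))) hr
      have n1 := norm_nonneg (wD j φc z')
      have n2 := norm_nonneg (wDbar j φc z')
      have n3 := norm_nonneg (wD j ψc z')
      have n4 := norm_nonneg (wDbar j ψc z')
      linarith
  obtain ⟨hb1, hb2, hb3, hb4, hψC⟩ := hb z hzK
  have hsumbound : ∀ (c : Fin n → ℂ), (∑ j, ‖c j‖) ≤ C → ‖∑ j, c j * v j‖ ≤ C * t := by
    intro c hc
    calc ‖∑ j, c j * v j‖ ≤ ∑ j, ‖c j * v j‖ := norm_sum_le _ _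
      _ = ∑ j, ‖c j‖ * ‖v j‖ := by simp [norm_mul]
      _ ≤ ∑ j, ‖c j‖ * t := Finset.sum_le_sum fun j _ =>
          mul_le_mul_of_nonneg_left (norm_le_pi_norm v j) (norm_nonneg _)
      _ = (∑ j, ‖c j‖) * t := (Finset.sum_mul _ _ _).symm
      _ ≤ C * t := mul_le_mul_of_nonneg_right hc (le_of_lt ht)
  have hconjv : ∀ k : Fin n, ‖(starRingEnd ℂ) (v k)‖ = ‖v k‖ := fun k => RCLike.norm_conj _
  have hTb : ‖T‖ ≤ C * t := hsumbound _ hb1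
  have hSψb : ‖Sψ‖ ≤ C * t := hsumbound _ hb3
  have hT'b : ‖T'‖ ≤ C * t := by
    rw [hT'def]
    calc ‖∑ k, wDbar k φc z * (starRingEnd ℂ) (v k)‖
        ≤ ∑ k, ‖wDbar k φc z * (starRingEnd ℂ) (v k)‖ := norm_sum_le _ _
      _ = ∑ k, ‖wDbar k φc z‖ * ‖v k‖ := by simp [norm_mul, hconjv]
      _ ≤ ∑ k, ‖wDbar k φc z‖ * t := Finset.sum_le_sum fun k _ =>
          mul_le_mul_of_nonneg_left (norm_le_pi_norm v k) (norm_nonneg _)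
      _ = (∑ k, ‖wDbar k φc z‖) * t := (Finset.sum_mul _ _ _).symm
      _ ≤ C * t := mul_le_mul_of_nonneg_right hb2 (le_of_lt ht)
  have hSψ'b : ‖Sψ'‖ ≤ C * t := by
    rw [hSψ'def]
    calc ‖∑ k, wDbar k ψc z * (starRingEnd ℂ) (v k)‖
        ≤ ∑ k, ‖wDbar k ψc z * (starRingEnd ℂ) (v k)‖ := norm_sum_le _ _
      _ = ∑ k, ‖wDbar k ψc z‖ * ‖v k‖ := by simp [norm_mul, hconjv]
      _ ≤ ∑ k, ‖wDbar k ψc z‖ * t := Finset.sum_le_sum fun k _ =>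
          mul_le_mul_of_nonneg_left (norm_le_pi_norm v k) (norm_nonneg _)
      _ = (∑ k, ‖wDbar k ψc z‖) * t := (Finset.sum_mul _ _ _).symm
      _ ≤ C * t := mul_le_mul_of_nonneg_right hb4 (le_of_lt ht)
  have hrelb : ∀ w1 w2 : ℂ, ‖w1‖ ≤ C * t → ‖w2‖ ≤ C * t → -(C^2*t^2) ≤ (w1 * w2).re := by
    intro w1 w2 h1 h2
    have h3 : |(w1 * w2).re| ≤ ‖w1 * w2‖ := Complex.abs_re_le_norm _
    have h4 : ‖w1 * w2‖ = ‖w1‖ * ‖w2‖ := norm_mul _ _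
    have h5 : ‖w1‖ * ‖w2‖ ≤ (C*t) * (C*t) :=
      mul_le_mul h1 h2 (norm_nonneg _) (by positivity)
    have h6 := neg_abs_le (w1 * w2).re
    nlinarith
  have hx_lb : -(C^2*t^2) ≤ x := hrelb T T' hTb hT'b
  have hy2_lb : -(C^2*t^2) ≤ y2 := hrelb Sψ T' hSψb hT'b
  have hy3_lb : -(C^2*t^2) ≤ y3 := hrelb T Sψ' hTb hSψ'b
  have hqφ0 : 0 ≤ qφ := hφpsh z hzΩ v
  have hψz : 0 < ψ z := hψpos z hzΩ
  rw [hQre]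
  apply mul_pos (Real.exp_pos _)
  have e2 : a^2 * qφ ≤ a * (1 + a^2 * ψ z) * qφ := by
    nlinarith [mul_nonneg (mul_nonneg ha0.le (sub_nonneg.mpr ha1)) hqφ0,
      mul_nonneg (mul_nonneg (pow_nonneg ha0.le 3) hψz.le) hqφ0]
  have e3 : a^2 * x - a^3*C^3*t^2 ≤ a^2 * (1 + a^2 * ψ z) * x := by
    have h1 : a^4 * ψ z * x ≥ a^4 * ψ z * (-(C^2*t^2)) :=
      mul_le_mul_of_nonneg_left hx_lb (by positivity)
    have h2 : a^4 * ψ z * (C^2*t^2) ≤ a^3 * C^3 * t^2 := by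
      nlinarith [mul_pos ht ht, sq_nonneg t, pow_nonneg ha0.le 3,
        mul_nonneg (mul_nonneg (pow_nonneg ha0.le 3) (sub_nonneg.mpr ha1))
          (mul_nonneg (mul_nonneg (sq_nonneg C) (sq_nonneg t)) hψz.le),
        mul_nonneg (mul_nonneg (mul_nonneg (pow_nonneg ha0.le 4) hψz.le) (sq_nonneg t))
          (mul_nonneg (sq_nonneg C) (sub_nonneg.mpr hψC))]
    nlinarith
  have e4 : -(a^3*C^2*t^2) ≤ a^3 * y2 := by
    have := mul_le_mul_of_nonneg_left hy2_lb (pow_nonneg ha0.le 3)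
    nlinarith
  have e5 : -(a^3*C^2*t^2) ≤ a^3 * y3 := by
    have := mul_le_mul_of_nonneg_left hy3_lb (pow_nonneg ha0.le 3)
    nlinarith
  have e1 : a^2 * (ε * t^2) ≤ a^2 * (qφ + x + qψ) :=
    mul_le_mul_of_nonneg_left hsum (sq_nonneg a)
  have efin : 0 < a^2 * (ε * t^2) - a^3*C^3*t^2 - 2*(a^3*C^2*t^2) := by
    have hfac : 0 < ε - a*C^3 - 2*(a*C^2) := by
      nlinarith [haε, mul_pos ha0 hC0', mul_pos (mul_pos ha0 hC0') hC0',
        mul_nonneg (mul_nonneg ha0.le (sub_nonneg.mpr hC1))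
          (mul_nonneg hC0'.le hC0'.le)]
    have : 0 < (a^2 * t^2) * (ε - a*C^3 - 2*(a*C^2)) := by positivity
    nlinarith [this]
  nlinarith [e1, e2, e3, e4, e5, efin]
end

section
/- There is no positive harmonic function u on ℂ* = ℂ \ {0} satisfying u(λz) = c·u(z) for all z ∈ ℂ*, where λ ∈ ℂ with |λ| > 1 and c > 0, c ≠ 1 are fixed constants. -/
open Metric Nat
private lemma aux_const_of_deriv_zero {s : Set ℂ} (ho : IsOpen s) (hc : Convex ℝ s)
    {D : ℂ → ℂ} (hD : DifferentiableOn ℂ D s) (h0 : ∀ x ∈ s, deriv D x = 0)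
    {a b : ℂ} (ha : a ∈ s) (hb : b ∈ s) : D a = D b := by
  refine hc.is_const_of_fderivWithin_eq_zero hD (fun x hx => ?_) ha hb
  rw [fderivWithin_of_isOpen ho hx]
  have hdx : DifferentiableAt ℂ D x := hD.differentiableAt (ho.mem_nhds hx)
  have h1 : HasDerivAt D 0 x := by
    have := hdx.hasDerivAt
    rwa [h0 x hx] at this
  have h2 : HasFDerivAt D (0 : ℂ →L[ℂ] ℂ) x := by
    have := h1.hasFDerivAt
    rwa [ContinuousLinearMap.toSpanSingleton_zero] at this
  exact h2.fderiv

private lemma aux_sub_const_of_re_eq {s : Set ℂ} (ho : IsOpen s) (hc : Convex ℝ s)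
    {H₁ H₂ : ℂ → ℂ} (h₁ : DifferentiableOn ℂ H₁ s) (h₂ : DifferentiableOn ℂ H₂ s)
    (hre : ∀ x ∈ s, (H₁ x).re = (H₂ x).re) {a b : ℂ} (ha : a ∈ s) (hb : b ∈ s) :
    H₁ a - H₂ a = H₁ b - H₂ b := by
  set D := fun x => H₁ x - H₂ x with hDdef
  have hD : DifferentiableOn ℂ D s := h₁.sub h₂
  have hDre : ∀ x ∈ s, (D x).re = 0 := fun x hx => by
    simp [hDdef, Complex.sub_re, hre x hx]
  have hE : DifferentiableOn ℂ (fun x => Complex.exp (D x)) s := hD.cexp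
  have hnorm : ∀ x ∈ s, ‖Complex.exp (D x)‖ = 1 := fun x hx => by
    rw [Complex.norm_exp, hDre x hx, Real.exp_zero]
  have h0 : ∀ x ∈ s, deriv D x = 0 := by
    intro x hx
    have hmax : IsMaxOn (norm ∘ fun y => Complex.exp (D y)) s x := by
      intro y hy
      simp only [Function.comp_apply, Set.mem_setOf_eq]
      rw [hnorm y hy, hnorm x hx]
    have heq := Complex.eqOn_of_isPreconnected_of_isMaxOn_norm hc.isPreconnected ho hE hx hmax
    have hev : (fun y => Complex.exp (D y)) =ᶠ[nhds x] fun _ => Complex.exp (D x) := by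
      filter_upwards [ho.mem_nhds hx] with y hy using heq hy
    have hDx : DifferentiableAt ℂ D x := hD.differentiableAt (ho.mem_nhds hx)
    have h1 : HasDerivAt (fun y => Complex.exp (D y)) (Complex.exp (D x) * deriv D x) x :=
      hDx.hasDerivAt.cexp
    have h2 : deriv (fun y => Complex.exp (D y)) x = 0 := by
      rw [hev.deriv_eq]
      exact deriv_const x _
    rw [h1.deriv] at h2
    exact (mul_eq_zero.mp h2).resolve_left (Complex.exp_ne_zero _)
  exact aux_const_of_deriv_zero ho hc hD h0 ha hb

private lemma aux_deriv_eq_of_re_eq {s : Set ℂ} (ho : IsOpen s) (hc : Convex ℝ s)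
    {H₁ H₂ : ℂ → ℂ} (h₁ : DifferentiableOn ℂ H₁ s) (h₂ : DifferentiableOn ℂ H₂ s)
    (hre : ∀ x ∈ s, (H₁ x).re = (H₂ x).re) {a : ℂ} (ha : a ∈ s) :
    deriv H₁ a = deriv H₂ a := by
  have hev : (fun x => H₁ x - H₂ x) =ᶠ[nhds a] fun _ => H₁ a - H₂ a := by
    filter_upwards [ho.mem_nhds ha] with y hy using
      aux_sub_const_of_re_eq ho hc h₁ h₂ hre hy ha
  have h1a : DifferentiableAt ℂ H₁ a := h₁.differentiableAt (ho.mem_nhds ha)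
  have h2a : DifferentiableAt ℂ H₂ a := h₂.differentiableAt (ho.mem_nhds ha)
  have h3 := hev.deriv_eq
  rw [deriv_fun_sub h1a h2a, deriv_const] at h3
  exact sub_eq_zero.mp h3


/-- There is no positive harmonic function `u` on `ℂ* = ℂ \ {0}` with
`u(λz) = c·u(z)` for fixed `|λ| > 1` and `c > 0`, `c ≠ 1`.  Harmonic means
locally the real part of a holomorphic function. -/
theorem no_positive_harmonic_multiplicatively_automorphic_on_Cstar
    (u : ℂ → ℝ) (lam : ℂ) (hlam : 1 < ‖lam‖)
    (c : ℝ) (hc : 0 < c) (hc1 : c ≠ 1)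
    (hharm : ∀ z : ℂ, z ≠ 0 → ∃ ε > (0:ℝ), ∃ F : ℂ → ℂ,
      ball z ε ⊆ {0}ᶜ ∧ DifferentiableOn ℂ F (ball z ε) ∧
        ∀ w ∈ ball z ε, u w = (F w).re)
    (hpos : ∀ z : ℂ, z ≠ 0 → 0 < u z)
    (hauto : ∀ z : ℂ, z ≠ 0 → u (lam * z) = c * u z) :
    False := by
  classical
  have hlam0 : lam ≠ 0 := by
    intro h
    rw [h] at hlam
    simp at hlam
    linarith
  -- Step A : local holomorphic representatives of u ∘ exp
  have hloc : ∀ w : ℂ, ∃ ε > (0:ℝ), ∃ H : ℂ → ℂ, DifferentiableOn ℂ H (ball w ε) ∧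
      ∀ x ∈ ball w ε, u (Complex.exp x) = (H x).re := by
    intro w
    obtain ⟨ε, hε, F, hsub, hFd, hFre⟩ := hharm (Complex.exp w) (Complex.exp_ne_zero w)
    obtain ⟨δ, hδ, hmap⟩ := Metric.continuous_iff.mp Complex.continuous_exp w ε hε
    refine ⟨δ, hδ, F ∘ Complex.exp, ?_, ?_⟩
    · refine hFd.comp Complex.differentiable_exp.differentiableOn ?_
      intro x hx
      exact mem_ball.mpr (hmap x (mem_ball.mp hx))
    · intro x hx
      exact hFre _ (mem_ball.mpr (hmap x (mem_ball.mp hx)))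
  choose ε hε H hHd hHre using hloc
  -- Step B/C : glued derivative g
  set g : ℂ → ℂ := fun w => deriv (H w) w with hgdef
  have hgev : ∀ w₀ : ℂ, ∀ w ∈ ball w₀ (ε w₀), g w = deriv (H w₀) w := by
    intro w₀ w hw
    have hww : w ∈ ball w (ε w) := mem_ball_self (hε w)
    have ho : IsOpen (ball w (ε w) ∩ ball w₀ (ε w₀)) := isOpen_ball.inter isOpen_ball
    have hcv : Convex ℝ (ball w (ε w) ∩ ball w₀ (ε w₀)) :=
      (convex_ball _ _).inter (convex_ball _ _)
    have hre : ∀ x ∈ ball w (ε w) ∩ ball w₀ (ε w₀), (H w x).re = (H w₀ x).re := fun x hx => by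
      rw [← hHre w x hx.1, ← hHre w₀ x hx.2]
    exact aux_deriv_eq_of_re_eq ho hcv ((hHd w).mono Set.inter_subset_left)
      ((hHd w₀).mono Set.inter_subset_right) hre ⟨hww, hw⟩
  have hg : Differentiable ℂ g := by
    intro w₀
    have hev : g =ᶠ[nhds w₀] deriv (H w₀) := by
      filter_upwards [isOpen_ball.mem_nhds (mem_ball_self (hε w₀))] with y hy using hgev w₀ y hy
    have hanal : AnalyticOnNhd ℂ (deriv (H w₀)) (ball w₀ (ε w₀)) :=
      ((hHd w₀).analyticOnNhd isOpen_ball).deriv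
    exact ((hanal w₀ (mem_ball_self (hε w₀))).differentiableAt).congr_of_eventuallyEq hev
  -- Step D : entire primitive G of g
  set a : ℕ → ℂ := fun n => (n ! : ℂ)⁻¹ * iteratedDeriv n g 0 with hadef
  set G : ℂ → ℂ := fun w => ∑' n : ℕ, a n / ((n : ℂ) + 1) * w ^ (n + 1) with hGdef
  have hGderiv : ∀ y : ℂ, HasDerivAt G (g y) y := by
    intro y
    set R : ℝ := ‖y‖ + 1 with hRdef
    have hR : 0 < R := by positivity
    have hs2R := (Complex.hasSum_taylorSeries_of_entire hg 0 (((2 * R : ℝ)) : ℂ)).summable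
    have hsum : Summable fun n : ℕ => a n * ((2 * R : ℝ) : ℂ) ^ n := by
      refine hs2R.congr fun n => ?_
      simp only [smul_eq_mul, sub_zero, hadef]
      ring
    have htend : Filter.Tendsto (fun n : ℕ => ‖a n‖ * (2 * R) ^ n) Filter.atTop (nhds 0) := by
      have h1 := hsum.tendsto_atTop_zero.norm
      rw [norm_zero] at h1
      refine h1.congr fun n => ?_
      rw [norm_mul, norm_pow, Complex.norm_real, Real.norm_of_nonneg (by positivity)]
    obtain ⟨C, hC⟩ := htend.bddAbove_range
    have hCb : ∀ n : ℕ, ‖a n‖ * (2 * R) ^ n ≤ C := fun n => hC (Set.mem_range_self n)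
    have hu : Summable fun n : ℕ => C * (1 / 2 : ℝ) ^ n :=
      (summable_geometric_of_lt_one (by norm_num) (by norm_num)).mul_left C
    have key := hasDerivAt_tsum_of_isPreconnected hu isOpen_ball
      (convex_ball (0 : ℂ) R).isPreconnected
      (g := fun (n : ℕ) (w : ℂ) => a n / ((n : ℂ) + 1) * w ^ (n + 1))
      (g' := fun (n : ℕ) (w : ℂ) => a n * w ^ n)
      (y₀ := 0) (y := y) ?_ ?_ ?_ ?_ ?_
    · have h2 : (∑' n : ℕ, a n * y ^ n) = g y := by
        have h3 := Complex.taylorSeries_eq_of_entire' (c := 0) (z := y) hg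
        rw [← h3]
        congr 1
        funext n
        rw [sub_zero, hadef, mul_assoc]
      rwa [h2] at key
    · intro n x hx
      have h1 : HasDerivAt (fun w : ℂ => w ^ (n + 1)) (((n : ℂ) + 1) * x ^ n) x := by
        have := hasDerivAt_pow (n + 1) x
        simpa using this
      have h2 := h1.const_mul (a n / ((n : ℂ) + 1))
      have hne : ((n : ℂ) + 1) ≠ 0 := Nat.cast_add_one_ne_zero n
      refine h2.congr_deriv ?_
      rw [div_mul_eq_mul_div, div_eq_iff hne]
      ring
    · intro n x hx
      rw [norm_mul, norm_pow]
      have hxR : ‖x‖ ≤ R := le_of_lt (mem_ball_zero_iff.mp hx)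
      have h1 : ‖x‖ ^ n ≤ R ^ n := pow_le_pow_left₀ (norm_nonneg x) hxR n
      have h2 : ‖a n‖ * ‖x‖ ^ n ≤ ‖a n‖ * R ^ n :=
        mul_le_mul_of_nonneg_left h1 (norm_nonneg _)
      have h3 : ‖a n‖ * R ^ n = (‖a n‖ * (2 * R) ^ n) * (1 / 2 : ℝ) ^ n := by
        rw [mul_pow, div_pow, one_pow]
        field_simp
      calc ‖a n‖ * ‖x‖ ^ n ≤ ‖a n‖ * R ^ n := h2
        _ = (‖a n‖ * (2 * R) ^ n) * (1 / 2 : ℝ) ^ n := h3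
        _ ≤ C * (1 / 2 : ℝ) ^ n :=
            mul_le_mul_of_nonneg_right (hCb n) (by positivity)
    · exact mem_ball_self hR
    · have hz : (fun n : ℕ => a n / ((n : ℂ) + 1) * (0 : ℂ) ^ (n + 1)) = fun _ => 0 := by
        funext n
        simp [pow_succ]
      rw [hz]
      exact summable_zero
    · exact mem_ball_zero_iff.mpr (by simp [hRdef])
  have hGdiff : Differentiable ℂ G := fun y => (hGderiv y).differentiableAt
  -- Step E : Re G - u ∘ exp is locally constant, hence constant
  have hlc : IsLocallyConstant (fun w => (G w).re - u (Complex.exp w)) := by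
    rw [IsLocallyConstant.iff_exists_open]
    intro w₀
    refine ⟨ball w₀ (ε w₀), isOpen_ball, mem_ball_self (hε w₀), ?_⟩
    intro x hx
    have hD : DifferentiableOn ℂ (fun y => G y - H w₀ y) (ball w₀ (ε w₀)) :=
      hGdiff.differentiableOn.sub (hHd w₀)
    have h0 : ∀ y ∈ ball w₀ (ε w₀), deriv (fun y => G y - H w₀ y) y = 0 := by
      intro y hy
      have hHy : DifferentiableAt ℂ (H w₀) y := (hHd w₀).differentiableAt (isOpen_ball.mem_nhds hy)
      rw [deriv_fun_sub (hGdiff y) hHy, (hGderiv y).deriv, ← hgev w₀ y hy, sub_self]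
    have hcst := aux_const_of_deriv_zero isOpen_ball (convex_ball _ _) hD h0 hx
      (mem_ball_self (hε w₀))
    have hre := congrArg Complex.re hcst
    simp only [Complex.sub_re] at hre
    rw [← hHre w₀ x hx, ← hHre w₀ w₀ (mem_ball_self (hε w₀))] at hre
    linarith
  have hconst : ∀ w : ℂ, (G w).re - u (Complex.exp w) = (G 0).re - u (Complex.exp 0) :=
    fun w => hlc.apply_eq_of_preconnectedSpace w 0
  set k : ℝ := (G 0).re - u (Complex.exp 0) with hkdef
  -- Liouville
  have hbdd : Bornology.IsBounded (Set.range fun w => Complex.exp (-G w)) := by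
    rw [isBounded_iff_forall_norm_le]
    refine ⟨Real.exp (-k), ?_⟩
    rintro x ⟨w, rfl⟩
    rw [Complex.norm_exp, Complex.neg_re]
    apply Real.exp_le_exp.mpr
    have h1 := hconst w
    have h2 : 0 < u (Complex.exp w) := hpos _ (Complex.exp_ne_zero w)
    linarith
  have hhdiff : Differentiable ℂ (fun w => Complex.exp (-G w)) := hGdiff.neg.cexp
  have heq := hhdiff.apply_eq_apply_of_bounded hbdd
  have hvconst : ∀ w : ℂ, u (Complex.exp w) = u (Complex.exp 0) := by
    intro w
    have h1 := congrArg norm (heq w 0)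
    rw [Complex.norm_exp, Complex.norm_exp, Complex.neg_re, Complex.neg_re] at h1
    have h2 : -(G w).re = -(G 0).re := Real.exp_injective h1
    have h3 := hconst w
    linarith
  have h1 : u lam = u 1 := by
    have := hvconst (Complex.log lam)
    rwa [Complex.exp_log hlam0, Complex.exp_zero] at this
  have h2 : u lam = c * u 1 := by
    have := hauto 1 one_ne_zero
    rwa [mul_one] at this
  have h3 : 0 < u 1 := hpos 1 one_ne_zero
  apply hc1
  have h4 : c * u 1 = 1 * u 1 := by rw [← h2, h1, one_mul]
  exact mul_right_cancel₀ (ne_of_gt h3) h4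
end
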